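/- Let R = R₀ + R₁ where R₀ is the quaternionic projective curvature tensor on (V,I,J,K) and R₁ is an algebraic curvature tensor that is Kähler with respect to I (so R₁^iso(X,IX,Y,IY) = 0 for orthonormal {X,IX,Y,IY}). If {X,IX,Y,IY} is orthonormal and R^iso(X,IX,IY,Y) = 0, then R₁(X,IX,Y,IY) = −(1 + e(X,Y))/2, where e(X,Y) = ⟨JX,Y⟩² + ⟨KX,Y⟩². -/

import Mathlib

/-! Both parts of `R = R₀ + R₁` have an isotropic curvature on the frame `(X, IX, IY, Y)` that can
be computed outright: for the Kähler tensor `R₁` it is `4 R₁(X,IX,Y,IY)`, and for `R₀` it is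
`2 (1 + e(X,Y))`. Since isotropic curvature is additive in the tensor, `R^iso = 0` forces
`R₁(X,IX,Y,IY) = -(1 + e(X,Y))/2`. -/

open scoped RealInnerProductSpace

/-- The curvature tensor `R₀` of quaternionic projective space as a `(0,4)`-tensor. -/
noncomputable def quatR0 {E : Type*} [NormedAddCommGroup E] [InnerProductSpace ℝ E]
    (I J K : E →ₗ[ℝ] E) (X Y Z W : E) : ℝ :=
  (1 / 4) * (⟪X, Z⟫ * ⟪Y, W⟫ - ⟪Y, Z⟫ * ⟪X, W⟫
    + 2 * ⟪I X, Y⟫ * ⟪I Z, W⟫ + ⟪I X, Z⟫ * ⟪I Y, W⟫ - ⟪I Y, Z⟫ * ⟪I X, W⟫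
    + 2 * ⟪J X, Y⟫ * ⟪J Z, W⟫ + ⟪J X, Z⟫ * ⟪J Y, W⟫ - ⟪J Y, Z⟫ * ⟪J X, W⟫
    + 2 * ⟪K X, Y⟫ * ⟪K Z, W⟫ + ⟪K X, Z⟫ * ⟪K Y, W⟫ - ⟪K Y, Z⟫ * ⟪K X, W⟫)

/-- The isotropic-curvature expression of a `(0,4)`-tensor on a 4-frame. -/
noncomputable def isoCurv4 {E : Type*} (R : E → E → E → E → ℝ)
    (e₁ e₂ e₃ e₄ : E) : ℝ :=
  R e₁ e₃ e₁ e₃ + R e₁ e₄ e₁ e₄ + R e₂ e₃ e₂ e₃ + R e₂ e₄ e₂ e₄ - 2 * R e₁ e₂ e₃ e₄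

theorem isoCurv4_add {E : Type*} (R S : E → E → E → E → ℝ) (e₁ e₂ e₃ e₄ : E) :
    isoCurv4 (fun x y z w => R x y z w + S x y z w) e₁ e₂ e₃ e₄ =
      isoCurv4 R e₁ e₂ e₃ e₄ + isoCurv4 S e₁ e₂ e₃ e₄ := by
  simp only [isoCurv4]
  ring

section KaehlerCurvature

variable {E : Type*} [AddCommGroup E] [Module ℝ E]
  (R : E →ₗ[ℝ] E →ₗ[ℝ] E →ₗ[ℝ] E →ₗ[ℝ] ℝ)

theorem curvature_antisymm_right (hA : ∀ x y z w, R x y z w = - R y x z w)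
    (hP : ∀ x y z w, R x y z w = R z w x y) (x y z w : E) :
    R x y z w = - R x y w z := by
  rw [hP, hA, hP w z]

theorem kaehler_curvature_apply_complex_left {I : E →ₗ[ℝ] E} (hI2 : ∀ x, I (I x) = -x)
    (hKae : ∀ x y z w, R (I x) (I y) z w = R x y z w) (x y z w : E) :
    R (I x) y z w = - R x (I y) z w := by
  have h := hKae x (I y) z w
  simp only [hI2, map_neg, LinearMap.neg_apply] at h
  linarith

/-- For a Kähler curvature tensor, the first Bianchi identity gives
`R(X,IX,Y,IY) = R(X,Y,X,Y) + R(X,IY,X,IY)`, and `I`-invariance identifies the four sectional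
terms of the isotropic curvature pairwise. -/
theorem isoCurv4_kaehler {I : E →ₗ[ℝ] E} (hI2 : ∀ x, I (I x) = -x)
    (hA : ∀ x y z w, R x y z w = - R y x z w) (hP : ∀ x y z w, R x y z w = R z w x y)
    (hB1 : ∀ x y z w, R x y z w + R y z x w + R z x y w = 0)
    (hKae : ∀ x y z w, R (I x) (I y) z w = R x y z w) (X Y : E) :
    isoCurv4 (fun x y z w => R x y z w) X (I X) (I Y) Y = 4 * R X (I X) Y (I Y) := by
  have hIleft := kaehler_curvature_apply_complex_left R hI2 hKae
  have hsecIXIY : R (I X) (I Y) (I X) (I Y) = R X Y X Y := by rw [hKae, hP, hKae]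
  have hsecIXY : R (I X) Y (I X) Y = R X (I Y) X (I Y) := by
    rw [hIleft, hP X (I Y), hIleft, neg_neg]
  have hbianchi : R X (I X) Y (I Y) = R X Y X Y + R X (I Y) X (I Y) := by
    have h := hB1 X (I X) Y (I Y)
    rw [hIleft, hP X (I Y), hA Y, hP X Y, hKae] at h
    linarith
  simp only [isoCurv4]
  rw [hsecIXIY, hsecIXY, curvature_antisymm_right R hA hP X (I X) (I Y) Y]
  linarith

end KaehlerCurvature

section QuaternionicCurvature

variable {E : Type*} [NormedAddCommGroup E] [InnerProductSpace ℝ E]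

theorem inner_apply_left_of_isometry_of_sq_neg {A : E →ₗ[ℝ] E} (hA2 : ∀ x, A (A x) = -x)
    (hAO : ∀ x y, ⟪A x, A y⟫ = ⟪x, y⟫) (x y : E) : ⟪A x, y⟫ = -⟪x, A y⟫ := by
  rw [← hAO, hA2, inner_neg_left]

theorem inner_apply_self_of_skew {A : E →ₗ[ℝ] E} (hA : ∀ x y, ⟪A x, y⟫ = -⟪x, A y⟫) (x : E) :
    ⟪A x, x⟫ = 0 := by
  have h := hA x x
  rw [real_inner_comm (A x) x] at h
  linarith

theorem quatR0_sectional {I J K : E →ₗ[ℝ] E} (hI : ∀ x y, ⟪I x, y⟫ = -⟪x, I y⟫)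
    (hJ : ∀ x y, ⟪J x, y⟫ = -⟪x, J y⟫) (hK : ∀ x y, ⟪K x, y⟫ = -⟪x, K y⟫) (u v : E) :
    quatR0 I J K u v u v = (⟪u, u⟫ * ⟪v, v⟫ - ⟪u, v⟫ ^ 2
      + 3 * (⟪I u, v⟫ ^ 2 + ⟪J u, v⟫ ^ 2 + ⟪K u, v⟫ ^ 2)) / 4 := by
  have swap : ∀ {A : E →ₗ[ℝ] E}, (∀ x y, ⟪A x, y⟫ = -⟪x, A y⟫) → ⟪A v, u⟫ = -⟪A u, v⟫ :=
    fun hA => by rw [hA, real_inner_comm]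
  simp only [quatR0, real_inner_comm u v, inner_apply_self_of_skew hI,
    inner_apply_self_of_skew hJ, inner_apply_self_of_skew hK, swap hI, swap hJ, swap hK]
  ring

/-- Each of the four sectional terms equals `(1 + 3e)/4`, and `-2 R₀(X,IX,IY,Y) = 1 - e`. -/
theorem isoCurv4_quatR0 {I J K : E →ₗ[ℝ] E} (hI2 : ∀ x, I (I x) = -x)
    (hI : ∀ x y, ⟪I x, y⟫ = -⟪x, I y⟫) (hJ : ∀ x y, ⟪J x, y⟫ = -⟪x, J y⟫)
    (hK : ∀ x y, ⟪K x, y⟫ = -⟪x, K y⟫)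
    (hIJ : ∀ x, I (J x) = K x) (hIK : ∀ x, I (K x) = - J x)
    {X Y : E} (hX : ‖X‖ = 1) (hY : ‖Y‖ = 1) (hXY : ⟪X, Y⟫ = 0) (hXIY : ⟪X, I Y⟫ = 0) :
    isoCurv4 (quatR0 I J K) X (I X) (I Y) Y = 2 * (1 + (⟪J X, Y⟫ ^ 2 + ⟪K X, Y⟫ ^ 2)) := by
  have hI' : ∀ x y, ⟪x, I y⟫ = -⟪I x, y⟫ := fun x y => by rw [hI, neg_neg]
  have hII : ∀ x y, ⟪I x, I y⟫ = ⟪x, y⟫ := fun x y => by rw [hI, hI2, inner_neg_right, neg_neg]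
  have hJxIy : ∀ x y, ⟪J x, I y⟫ = -⟪K x, y⟫ := fun x y => by rw [hI', hIJ]
  have hKxIy : ∀ x y, ⟪K x, I y⟫ = ⟪J x, y⟫ := fun x y => by rw [hI', hIK, inner_neg_left, neg_neg]
  have hJIx : ∀ x y, ⟪J (I x), y⟫ = -⟪K x, y⟫ := fun x y => by
    rw [hJ, hI, hIJ, hK, neg_neg]
  have hKIx : ∀ x y, ⟪K (I x), y⟫ = ⟪J x, y⟫ := fun x y => by
    rw [hK, hI, hIK, hJ, inner_neg_right, neg_neg]
  have hXX : ⟪X, X⟫ = 1 := by rw [real_inner_self_eq_norm_sq, hX, one_pow]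
  have hYY : ⟪Y, Y⟫ = 1 := by rw [real_inner_self_eq_norm_sq, hY, one_pow]
  have hIXY : ⟪I X, Y⟫ = 0 := by rw [hI, hXIY, neg_zero]
  simp only [isoCurv4, quatR0_sectional hI hJ hK]
  simp only [quatR0, hII, hJxIy, hKxIy, hJIx, hKIx, hI2, inner_neg_left, hXX, hYY,
    hXY, hXIY, hIXY, inner_apply_self_of_skew hJ, inner_apply_self_of_skew hK]
  ring

end QuaternionicCurvature

theorem quat_decomposition_R1_value_general
    {E : Type*} [NormedAddCommGroup E] [InnerProductSpace ℝ E]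
    (I J K : E →ₗ[ℝ] E)
    (hI2 : ∀ x, I (I x) = -x) (hJ2 : ∀ x, J (J x) = -x) (hK2 : ∀ x, K (K x) = -x)
    (hIO : ∀ x y, ⟪I x, I y⟫ = ⟪x, y⟫) (hJO : ∀ x y, ⟪J x, J y⟫ = ⟪x, y⟫)
    (hKO : ∀ x y, ⟪K x, K y⟫ = ⟪x, y⟫)
    (hIJ : ∀ x, I (J x) = K x)
    (hIK : ∀ x, I (K x) = - J x)
    (R₁ : E →ₗ[ℝ] E →ₗ[ℝ] E →ₗ[ℝ] E →ₗ[ℝ] ℝ)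
    (hA : ∀ x y z w, R₁ x y z w = - R₁ y x z w)
    (hP : ∀ x y z w, R₁ x y z w = R₁ z w x y)
    (hB1 : ∀ x y z w, R₁ x y z w + R₁ y z x w + R₁ z x y w = 0)
    (hKae : ∀ x y z w, R₁ (I x) (I y) z w = R₁ x y z w)
    (X Y : E) (hX : ‖X‖ = 1) (hY : ‖Y‖ = 1)
    (hXY : ⟪X, Y⟫ = 0) (hXIY : ⟪X, I Y⟫ = 0)
    (hiso : isoCurv4 (fun x y z w => quatR0 I J K x y z w + R₁ x y z w)
      X (I X) (I Y) Y = 0) :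
    R₁ X (I X) Y (I Y) = -(1 + (⟪J X, Y⟫ ^ 2 + ⟪K X, Y⟫ ^ 2)) / 2 := by
  have hI := inner_apply_left_of_isometry_of_sq_neg hI2 hIO
  have hJ := inner_apply_left_of_isometry_of_sq_neg hJ2 hJO
  have hK := inner_apply_left_of_isometry_of_sq_neg hK2 hKO
  rw [isoCurv4_add, isoCurv4_quatR0 hI2 hI hJ hK hIJ hIK hX hY hXY hXIY,
    isoCurv4_kaehler R₁ hI2 hA hP hB1 hKae] at hiso
  linarith

/-- Let `R = R₀ + R₁` where `R₀` is the quaternionic projective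
curvature tensor on `(V,I,J,K)` and `R₁` is an algebraic curvature tensor that is
Kähler with respect to `I`.  If `{X, IX, Y, IY}` is orthonormal and
`R^iso(X,IX,IY,Y) = 0`, then `R₁(X,IX,Y,IY) = −(1 + e(X,Y))/2`, where
`e(X,Y) = ⟪JX,Y⟫² + ⟪KX,Y⟫²`. -/
theorem quat_decomposition_R1_value
    {E : Type*} [NormedAddCommGroup E] [InnerProductSpace ℝ E] [FiniteDimensional ℝ E]
    {n : ℕ} (hdim : Module.finrank ℝ E = 4 * n)
    (I J K : E →ₗ[ℝ] E)
    (hI2 : ∀ x, I (I x) = -x) (hJ2 : ∀ x, J (J x) = -x) (hK2 : ∀ x, K (K x) = -x)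
    (hIO : ∀ x y, ⟪I x, I y⟫ = ⟪x, y⟫) (hJO : ∀ x y, ⟪J x, J y⟫ = ⟪x, y⟫)
    (hKO : ∀ x y, ⟪K x, K y⟫ = ⟪x, y⟫)
    (hIJ : ∀ x, I (J x) = K x) (hJI : ∀ x, J (I x) = - K x)
    (hJK : ∀ x, J (K x) = I x) (hKJ : ∀ x, K (J x) = - I x)
    (hKI : ∀ x, K (I x) = J x) (hIK : ∀ x, I (K x) = - J x)
    (R₁ : E →ₗ[ℝ] E →ₗ[ℝ] E →ₗ[ℝ] E →ₗ[ℝ] ℝ)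
    (hA : ∀ x y z w, R₁ x y z w = - R₁ y x z w)
    (hP : ∀ x y z w, R₁ x y z w = R₁ z w x y)
    (hB1 : ∀ x y z w, R₁ x y z w + R₁ y z x w + R₁ z x y w = 0)
    (hKae : ∀ x y z w, R₁ (I x) (I y) z w = R₁ x y z w)
    (X Y : E) (hX : ‖X‖ = 1) (hY : ‖Y‖ = 1)
    (hXY : ⟪X, Y⟫ = 0) (hXIY : ⟪X, I Y⟫ = 0)
    (hiso : isoCurv4 (fun x y z w => quatR0 I J K x y z w + R₁ x y z w)
      X (I X) (I Y) Y = 0) :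
    R₁ X (I X) Y (I Y) = -(1 + (⟪J X, Y⟫ ^ 2 + ⟪K X, Y⟫ ^ 2)) / 2 :=
  quat_decomposition_R1_value_general I J K hI2 hJ2 hK2 hIO hJO hKO hIJ hIK R₁ hA hP hB1 hKae X Y hX
    hY hXY hXIY hiso
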